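/- arXiv:2405.05534 — 3 statements merged into one kernel-verified Lean document; each statement's English description precedes it below -/
import Mathlib

section
/- Under the assumptions that each test statistic T_k (k = 2,…,K) is exactly standard normal conditionally on the data from folds 1,…,k−1, the sequential p-value p_seq = 2Φ(−|(1/√(K−1)) ∑_{k=2}^K T_k|) is uniformly distributed on [0,1]. -/
/-!
Given `F (k - 1)`, the law of `T k` is the constant `N(0, 1)`, so `T k` is independent of the
`F (k - 1)`-measurable partial sum `T 2 + ⋯ + T (k - 1)`; by induction `∑_{k=2}^K T k ∼ N(0, K - 1)`
and the normalised statistic is standard normal. For a symmetric law with continuous, strictly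
increasing cdf `Φ` and `q < 0`, the event `{2 Φ(-|X|) ≤ 2 Φ(q)}` is `{X ≤ q} ∪ {X ≥ -q}`, of
mass `2 Φ(q)`, so the two-sided p-value is uniform on `[0, 1]`.
-/

open MeasureTheory ProbabilityTheory Set
open scoped ENNReal NNReal

namespace ProbabilityTheory

lemma continuous_cdf (μ : Measure ℝ) [IsProbabilityMeasure μ] [NullSingletonClass μ] :
    Continuous (cdf μ) := by
  refine continuous_iff_continuousAt.2 fun x => ?_
  have hatom := (cdf μ).measure_singleton x
  rw [measure_cdf, measure_singleton, eq_comm, ENNReal.ofReal_eq_zero, sub_nonpos] at hatom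
  rw [(monotone_cdf μ).continuousAt_iff_leftLim_eq_rightLim, StieltjesFunction.rightLim_eq]
  exact le_antisymm ((monotone_cdf μ).leftLim_le le_rfl) hatom

lemma measure_Ici_neg_of_map_neg_eq (μ : Measure ℝ) (hμ : μ.map Neg.neg = μ) (x : ℝ) :
    μ (Ici (-x)) = μ (Iic x) := by
  rw [← hμ, Measure.map_apply measurable_neg measurableSet_Ici, hμ]
  congr 1
  ext y
  simp

lemma cdf_neg_of_map_neg_eq (μ : Measure ℝ) [IsProbabilityMeasure μ] [NullSingletonClass μ]
    (hμ : μ.map Neg.neg = μ) (x : ℝ) : cdf μ (-x) = 1 - cdf μ x := by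
  rw [cdf_eq_real, cdf_eq_real, measureReal_def, ← neg_neg x,
    ← measure_Ici_neg_of_map_neg_eq μ hμ, neg_neg, ← measure_congr Ioi_ae_eq_Ici, ← compl_Iic,
    prob_compl_eq_one_sub measurableSet_Iic,
    ENNReal.toReal_sub_of_le prob_le_one ENNReal.one_ne_top, ENNReal.toReal_one, measureReal_def]

lemma strictMono_cdf_gaussianReal (m : ℝ) {v : ℝ≥0} (hv : v ≠ 0) :
    StrictMono (cdf (gaussianReal m v)) := by
  intro a b hab
  rw [cdf_eq_real, cdf_eq_real, measureReal_def, measureReal_def,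
    ← Iic_union_Ioc_eq_Iic hab.le, measure_union (Iic_disjoint_Ioc le_rfl) measurableSet_Ioc]
  refine ENNReal.toReal_strict_mono (by finiteness)
    (ENNReal.lt_add_right (measure_ne_top _ _) fun h => ?_)
  simpa [hab.not_ge] using gaussianReal_absolutelyContinuous' m hv h

noncomputable def twoSidedPValue (μ : Measure ℝ) (x : ℝ) : ℝ := 2 * cdf μ (-|x|)

lemma measurable_twoSidedPValue (μ : Measure ℝ) : Measurable (twoSidedPValue μ) :=
  ((monotone_cdf μ).measurable.comp measurable_abs.neg).const_mul 2

lemma twoSidedPValue_le_iff (μ : Measure ℝ) (hmono : StrictMono (cdf μ)) (q x : ℝ) :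
    twoSidedPValue μ x ≤ 2 * cdf μ q ↔ x ≤ q ∨ -q ≤ x := by
  rw [twoSidedPValue, mul_le_mul_iff_right₀ two_pos, hmono.le_iff_le, neg_le, le_abs,
    neg_le_neg_iff, or_comm]

lemma cdf_zero_of_map_neg_eq (μ : Measure ℝ) [IsProbabilityMeasure μ] [NullSingletonClass μ]
    (hμ : μ.map Neg.neg = μ) : cdf μ 0 = 1 / 2 := by
  have := cdf_neg_of_map_neg_eq μ hμ 0
  rw [neg_zero] at this
  linarith

lemma twoSidedPValue_pos (μ : Measure ℝ) (hmono : StrictMono (cdf μ)) (x : ℝ) :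
    0 < twoSidedPValue μ x := by
  have := hmono (sub_one_lt (-|x|))
  linarith [cdf_nonneg μ (-|x| - 1), show twoSidedPValue μ x = 2 * cdf μ (-|x|) from rfl]

lemma twoSidedPValue_le_one (μ : Measure ℝ) [IsProbabilityMeasure μ] [NullSingletonClass μ]
    (hμ : μ.map Neg.neg = μ) (x : ℝ) : twoSidedPValue μ x ≤ 1 := by
  have := monotone_cdf μ (neg_nonpos.2 (abs_nonneg x))
  rw [cdf_zero_of_map_neg_eq μ hμ] at this
  rw [twoSidedPValue]
  linarith

lemma measure_twoSidedPValue_le (μ : Measure ℝ) [IsProbabilityMeasure μ]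
    (hμ : μ.map Neg.neg = μ) (hmono : StrictMono (cdf μ)) {q : ℝ} (hq : q < 0) :
    μ {x | twoSidedPValue μ x ≤ 2 * cdf μ q} = ENNReal.ofReal (2 * cdf μ q) := by
  have hpre : {x | twoSidedPValue μ x ≤ 2 * cdf μ q} = Iic q ∪ Ici (-q) := by
    ext x
    exact twoSidedPValue_le_iff μ hmono q x
  rw [hpre, measure_union (Iic_disjoint_Ici.2 (by linarith)) measurableSet_Ici,
    measure_Ici_neg_of_map_neg_eq μ hμ, ← ofReal_cdf, two_mul,
    ENNReal.ofReal_add (cdf_nonneg μ q) (cdf_nonneg μ q)]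

lemma map_twoSidedPValue (μ : Measure ℝ) [IsProbabilityMeasure μ] [NullSingletonClass μ]
    (hμ : μ.map Neg.neg = μ) (hmono : StrictMono (cdf μ)) :
    μ.map (twoSidedPValue μ) = volume.restrict (Icc 0 1) := by
  refine Measure.ext_of_Iic _ _ fun a => ?_
  rw [Measure.map_apply (measurable_twoSidedPValue μ) measurableSet_Iic,
    Measure.restrict_apply measurableSet_Iic]
  rcases le_or_gt 1 a with ha1 | ha1
  · rw [eq_univ_of_forall (s := twoSidedPValue μ ⁻¹' Iic a) fun x =>
        (twoSidedPValue_le_one μ hμ x).trans ha1,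
      inter_eq_right.2 fun x hx => hx.2.trans ha1]
    simp
  rw [show Iic a ∩ Icc 0 1 = Icc 0 a by ext; simp; grind, Real.volume_Icc, sub_zero]
  rcases le_or_gt a 0 with ha0 | ha0
  · rw [eq_empty_of_forall_notMem (s := twoSidedPValue μ ⁻¹' Iic a) fun x hx =>
        (twoSidedPValue_pos μ hmono x).not_ge ((mem_Iic.1 hx).trans ha0),
      measure_empty, ENNReal.ofReal_of_nonpos ha0]
  obtain ⟨q, hq⟩ : a / 2 ∈ range (cdf μ) :=
    mem_range_of_exists_le_of_exists_ge (continuous_cdf μ)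
      ((tendsto_cdf_atBot μ).eventually_le_const (half_pos ha0)).exists
      ((tendsto_cdf_atTop μ).eventually_const_le (by linarith)).exists
  have hq0 : q < 0 := hmono.lt_iff_lt.1 (by rw [hq, cdf_zero_of_map_neg_eq μ hμ]; linarith)
  have ha : a = 2 * cdf μ q := by rw [hq]; ring
  rw [ha]
  exact measure_twoSidedPValue_le μ hμ hmono hq0

lemma map_twoSidedPValue_gaussianReal {v : ℝ≥0} (hv : v ≠ 0) :
    (gaussianReal 0 v).map (twoSidedPValue (gaussianReal 0 v)) = volume.restrict (Icc 0 1) := by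
  have := nullSingletonClass_gaussianReal (μ := 0) hv
  refine map_twoSidedPValue _ ?_ (strictMono_cdf_gaussianReal 0 hv)
  simpa using gaussianReal_map_neg (μ := 0) (v := v)

lemma gaussianReal_map_inv_sqrt_mul {v : ℝ≥0} (hv : v ≠ 0) :
    (gaussianReal 0 v).map (fun x => 1 / √v * x) = gaussianReal 0 1 := by
  rw [gaussianReal_map_const_mul, mul_zero]
  congr 1
  ext
  simp [hv]

section ConditionalLaw

variable {Ω β : Type*} {m mΩ : MeasurableSpace Ω} {mβ : MeasurableSpace β}
  {μ : Measure Ω} {ν : Measure β} {X : Ω → β}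

lemma measure_preimage_inter_eq_of_condExp_indicator_eq [IsFiniteMeasure μ] [IsFiniteMeasure ν]
    (hm : m ≤ mΩ) (hX : Measurable X) {s : Set β} (hs : MeasurableSet s)
    (hcond : μ[(X ⁻¹' s).indicator (fun _ => (1 : ℝ)) | m] =ᵐ[μ] fun _ => (ν s).toReal)
    {B : Set Ω} (hB : MeasurableSet[m] B) :
    μ (X ⁻¹' s ∩ B) = ν s * μ B := by
  have hint : Integrable ((X ⁻¹' s).indicator (fun _ => (1 : ℝ))) μ :=
    (integrable_const 1).indicator (hX hs)
  have hset : ∫ ω in B, (X ⁻¹' s).indicator (fun _ => (1 : ℝ)) ω ∂μ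
      = ∫ ω in B, (ν s).toReal ∂μ := by
    rw [← setIntegral_condExp hm hint hB]
    exact setIntegral_congr_ae (hm _ hB) (hcond.mono fun ω hω _ => hω)
  rw [setIntegral_indicator (hX hs), setIntegral_const, setIntegral_const, smul_eq_mul,
    smul_eq_mul, mul_one, inter_comm, mul_comm] at hset
  rw [← ENNReal.toReal_eq_toReal_iff' (by finiteness) (by finiteness), ENNReal.toReal_mul]
  exact hset

lemma map_eq_of_condExp_indicator_eq [IsProbabilityMeasure μ] [IsFiniteMeasure ν]
    (hm : m ≤ mΩ) (hX : Measurable X)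
    (hcond : ∀ s, MeasurableSet s →
      μ[(X ⁻¹' s).indicator (fun _ => (1 : ℝ)) | m] =ᵐ[μ] fun _ => (ν s).toReal) :
    μ.map X = ν := by
  ext s hs
  simpa [Measure.map_apply hX hs] using
    measure_preimage_inter_eq_of_condExp_indicator_eq hm hX hs (hcond s hs) MeasurableSet.univ

lemma indepFun_of_condExp_indicator_eq [IsProbabilityMeasure μ] [IsFiniteMeasure ν]
    {γ : Type*} {mγ : MeasurableSpace γ} {Y : Ω → γ}
    (hm : m ≤ mΩ) (hY : Measurable[m] Y) (hX : Measurable X)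
    (hcond : ∀ s, MeasurableSet s →
      μ[(X ⁻¹' s).indicator (fun _ => (1 : ℝ)) | m] =ᵐ[μ] fun _ => (ν s).toReal) :
    IndepFun Y X μ := by
  rw [indepFun_iff_measure_inter_preimage_eq_mul]
  intro t s ht hs
  rw [inter_comm, measure_preimage_inter_eq_of_condExp_indicator_eq hm hX hs (hcond s hs) (hY ht),
    ← Measure.map_apply hX hs, map_eq_of_condExp_indicator_eq hm hX hcond, mul_comm]

lemma map_sum_Ioc_eq_gaussianReal [IsProbabilityMeasure μ] (F : Filtration ℕ mΩ)
    (T : ℕ → Ω → ℝ) (hT : ∀ k, Measurable[F k] (T k)) {a n : ℕ} (han : a ≤ n)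
    (hcond : ∀ k, a < k → k ≤ n → ∀ s : Set ℝ, MeasurableSet s →
      μ[(T k ⁻¹' s).indicator (fun _ => (1 : ℝ)) | F (k - 1)]
        =ᵐ[μ] fun _ => (gaussianReal 0 1 s).toReal) :
    μ.map (fun ω => ∑ k ∈ Finset.Ioc a n, T k ω) = gaussianReal 0 (n - a : ℕ) := by
  induction n, han using Nat.le_induction with
  | base => simp [Measure.map_const]
  | succ n han ih =>
    have hcond_succ := hcond (n + 1) (by omega) le_rfl
    have hT_succ : Measurable (T (n + 1)) := (hT _).mono (F.le _) le_rfl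
    have hsum : Measurable[F n] (fun ω => ∑ k ∈ Finset.Ioc a n, T k ω) :=
      Finset.measurable_sum _ fun k hk => (hT k).mono (F.mono (Finset.mem_Ioc.1 hk).2) le_rfl
    have hindep := indepFun_of_condExp_indicator_eq (F.le n) hsum hT_succ hcond_succ
    simp_rw [Finset.sum_Ioc_succ_top han]
    refine (gaussianReal_add_gaussianReal_of_indepFun hindep
      (ih fun k hk hkn => hcond k hk (by omega))
      (map_eq_of_condExp_indicator_eq (F.le n) hT_succ hcond_succ)).trans ?_
    rw [add_zero, Nat.sub_add_comm han, Nat.cast_succ]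

end ConditionalLaw

end ProbabilityTheory

/-- If each test statistic `T k` (for `k = 2, …, K`) is exactly standard normal
conditionally on the information `F (k-1)` from the previous folds, then the
sequential p-value `p_seq = 2 Φ(-|(1/√(K-1)) ∑_{k=2}^K T_k|)` is uniformly
distributed on `[0,1]`. -/
theorem sequential_pvalue_uniform
    {Ω : Type*} {mΩ : MeasurableSpace Ω} (μ : Measure Ω) [IsProbabilityMeasure μ]
    (K : ℕ) (hK : 2 ≤ K)
    (F : Filtration ℕ mΩ) (T : ℕ → Ω → ℝ)
    (hAdapted : ∀ k, Measurable[F k] (T k))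
    (hCondGauss : ∀ k, 2 ≤ k → k ≤ K → ∀ s : Set ℝ, MeasurableSet s →
      μ[(T k ⁻¹' s).indicator (fun _ => (1 : ℝ)) | F (k - 1)]
        =ᵐ[μ] fun _ => (gaussianReal 0 1 s).toReal) :
    μ.map (fun ω =>
        2 * cdf (gaussianReal 0 1)
          (-|(1 / Real.sqrt (K - 1)) * ∑ k ∈ Finset.Icc 2 K, T k ω|))
      = volume.restrict (Set.Icc (0 : ℝ) 1) := by
  have hT : ∀ k, Measurable (T k) := fun k => (hAdapted k).mono (F.le k) le_rfl
  have hsum : μ.map (fun ω => ∑ k ∈ Finset.Icc 2 K, T k ω) = gaussianReal 0 (K - 1 : ℕ) :=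
    Finset.Icc_add_one_left_eq_Ioc 1 K ▸
      map_sum_Ioc_eq_gaussianReal F T hAdapted (by omega) hCondGauss
  have hvar : (((K - 1 : ℕ) : ℝ≥0) : ℝ) = K - 1 := by
    rw [NNReal.coe_natCast, Nat.cast_sub (by omega), Nat.cast_one]
  have hnorm : μ.map (fun ω => 1 / Real.sqrt (K - 1) * ∑ k ∈ Finset.Icc 2 K, T k ω)
      = gaussianReal 0 1 := by
    rw [← gaussianReal_map_inv_sqrt_mul (v := (K - 1 : ℕ)) (Nat.cast_ne_zero.2 (by omega)),
      ← hsum, hvar, Measure.map_map (measurable_const_mul _) (by fun_prop)]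
    rfl
  calc _ = (μ.map fun ω => 1 / Real.sqrt (K - 1) * ∑ k ∈ Finset.Icc 2 K, T k ω).map
        (twoSidedPValue (gaussianReal 0 1)) :=
      (Measure.map_map (measurable_twoSidedPValue _) (by fun_prop)).symm
    _ = _ := by rw [hnorm, map_twoSidedPValue_gaussianReal one_ne_zero]
end

section
/- If p₁,…,p_K are random variables each marginally uniform on [0,1] (with arbitrary dependence) and K is odd, then for the median p_med we have P(p_med ≤ α) ≤ 2α for all α ∈ [0,1]. -/
/-!
If the median of `K` values is at most `α`, then more than half of them, i.e. at least
`K / 2 + 1`, are at most `α`. The number of `pₖ ≤ α` has expectation `K α` whatever the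
dependence, so Markov's inequality bounds the probability of the event by
`K α / (K / 2 + 1) ≤ 2 α`.
-/

open MeasureTheory ProbabilityTheory

/-- The sample median of `K` real numbers: the middle entry (index `K / 2`,
zero-based) of the sorted list of values. -/
noncomputable def sampleMedian {K : ℕ} (v : Fin K → ℝ) : ℝ :=
  ((List.ofFn v).mergeSort (· ≤ ·)).getD (K / 2) 0

open Finset

theorem List.mergeSort_ofFn_eq_ofFn_comp_sort {α : Type*} [LinearOrder α] {n : ℕ}
    (v : Fin n → α) :
    (List.ofFn v).mergeSort (· ≤ ·) = List.ofFn (v ∘ Tuple.sort v) :=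
  ((List.mergeSort_perm _ _).trans (Equiv.Perm.ofFn_comp_perm _ _).symm).eq_of_sortedLE
    List.sortedLE_mergeSort (Tuple.monotone_sort v).sortedLE_ofFn

theorem sampleMedian_le_iff {K : ℕ} (hK : 0 < K) (v : Fin K → ℝ) (α : ℝ) :
    sampleMedian v ≤ α ↔ K / 2 < #{k | v k ≤ α} := by
  have hmid : K / 2 < K := Nat.div_lt_self hK one_lt_two
  have hcard : #{k | v (Tuple.sort v k) ≤ α} = #{k | v k ≤ α} :=
    card_equiv (Tuple.sort v) (by simp)
  rw [sampleMedian, List.mergeSort_ofFn_eq_ofFn_comp_sort,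
    List.getD_eq_getElem _ _ (by simpa using hmid), List.getElem_ofFn, ← hcard]
  exact (Tuple.lt_card_le_iff_apply_le_of_monotone (j := ⟨K / 2, hmid⟩)
    (Tuple.monotone_sort v)).symm

open Classical in
theorem natCast_mul_measure_le_card_mem_le_sum {Ω ι : Type*} {mΩ : MeasurableSpace Ω} [Fintype ι]
    (μ : Measure Ω) {s : ι → Set Ω} (hs : ∀ i, NullMeasurableSet (s i) μ) (m : ℕ) :
    m * μ {ω | m ≤ #{i | ω ∈ s i}} ≤ ∑ i, μ (s i) := by
  set N : Ω → ENNReal := fun ω => ∑ i, (s i).indicator 1 ω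
  have hN : ∀ ω, N ω = #{i | ω ∈ s i} := fun ω => by
    simp [N, Set.indicator_apply]
  have hmeas : ∀ i, AEMeasurable ((s i).indicator (1 : Ω → ENNReal)) μ :=
    fun i => (aemeasurable_indicator_const_iff 1).2 (hs i)
  calc (m : ENNReal) * μ {ω | m ≤ #{i | ω ∈ s i}} = m * μ {ω | (m : ENNReal) ≤ N ω} := by
        simp only [hN, Nat.cast_le]
    _ ≤ ∫⁻ ω, N ω ∂μ := mul_meas_ge_le_lintegral₀ (aemeasurable_fun_sum _ fun i _ => hmeas i) _
    _ = ∑ i, μ (s i) := by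
        rw [lintegral_finsetSum' _ fun i _ => hmeas i]
        simp only [lintegral_indicator_one₀ (hs _)]

theorem measure_le_ofReal_of_map_eq_restrict_Icc {Ω : Type*} {mΩ : MeasurableSpace Ω}
    {μ : Measure Ω} {X : Ω → ℝ} (hX : AEMeasurable X μ)
    (hunif : μ.map X = volume.restrict (Set.Icc 0 1)) (α : ℝ) :
    μ {ω | X ω ≤ α} ≤ ENNReal.ofReal α :=
  calc μ {ω | X ω ≤ α} = volume (Set.Iic α ∩ Set.Icc 0 1) := by
        rw [← Measure.restrict_apply measurableSet_Iic, ← hunif,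
          Measure.map_apply_of_aemeasurable hX measurableSet_Iic]; rfl
    _ ≤ volume (Set.Icc 0 α) := measure_mono fun x hx => ⟨hx.2.1, hx.1⟩
    _ = ENNReal.ofReal α := by simp

theorem measure_sampleMedian_le_le_two_mul {Ω : Type*} {mΩ : MeasurableSpace Ω} (μ : Measure Ω)
    {K : ℕ} (hK : 0 < K) {p : Fin K → Ω → ℝ} (hp : ∀ k, AEMeasurable (p k) μ)
    {α : ℝ} {ε : ENNReal} (hε : ∀ k, μ {ω | p k ω ≤ α} ≤ ε) :
    μ {ω | sampleMedian (fun k => p k ω) ≤ α} ≤ 2 * ε := by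
  classical
  set m := K / 2 + 1
  have hmedian : {ω | sampleMedian (fun k => p k ω) ≤ α} =
      {ω | m ≤ #{k | ω ∈ {ω | p k ω ≤ α}}} := by
    ext ω
    simp only [Set.mem_ofPred_eq, sampleMedian_le_iff hK, Nat.lt_iff_add_one_le, m]
  have hcount := natCast_mul_measure_le_card_mem_le_sum μ
    (fun k => (hp k).nullMeasurable (measurableSet_Iic (a := α))) m
  have hKm : (K : ENNReal) ≤ m * 2 := by exact_mod_cast (by omega : K ≤ m * 2)
  refine (ENNReal.mul_le_mul_iff_right (by simp [m]) (ENNReal.natCast_ne_top m)).mp ?_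
  calc (m : ENNReal) * μ {ω | sampleMedian (fun k => p k ω) ≤ α}
      ≤ ∑ k, μ {ω | p k ω ≤ α} := hmedian ▸ hcount
    _ ≤ ∑ _k : Fin K, ε := sum_le_sum fun k _ => hε k
    _ = K * ε := by simp
    _ ≤ m * (2 * ε) := by rw [← mul_assoc]; gcongr

theorem median_aggregation_valid_general
    {Ω : Type*} {mΩ : MeasurableSpace Ω} (μ : Measure Ω)
    (K : ℕ) (hK : Odd K) (p : Fin K → Ω → ℝ)
    (hUnif : ∀ k, μ.map (p k) = volume.restrict (Set.Icc (0 : ℝ) 1)) :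
    ∀ α ∈ Set.Icc (0 : ℝ) 1,
      μ {ω | sampleMedian (fun k => p k ω) ≤ α} ≤ ENNReal.ofReal (2 * α) := by
  intro α _
  have hp : ∀ k, AEMeasurable (p k) μ := fun k =>
    .of_map_ne_zero (by simp [hUnif k, Real.volume_Icc])
  rw [ENNReal.ofReal_mul zero_le_two, ENNReal.ofReal_ofNat]
  exact measure_sampleMedian_le_le_two_mul μ hK.pos hp
    fun k => measure_le_ofReal_of_map_eq_restrict_Icc (hp k) (hUnif k) α

/-- Validity of median aggregation with a factor-2 correction: if
`p₁, …, p_K` are each marginally uniform on `[0,1]` (arbitrary dependence)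
and `K` is odd, then `P(p_med ≤ α) ≤ 2α` for all `α ∈ [0,1]`. -/
theorem median_aggregation_valid
    {Ω : Type*} {mΩ : MeasurableSpace Ω} (μ : Measure Ω) [IsProbabilityMeasure μ]
    (K : ℕ) (hK : Odd K) (p : Fin K → Ω → ℝ)
    (hRange : ∀ k ω, p k ω ∈ Set.Icc (0 : ℝ) 1)
    (hUnif : ∀ k, μ.map (p k) = volume.restrict (Set.Icc (0 : ℝ) 1)) :
    ∀ α ∈ Set.Icc (0 : ℝ) 1,
      μ {ω | sampleMedian (fun k => p k ω) ≤ α} ≤ ENNReal.ofReal (2 * α) :=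
  median_aggregation_valid_general (mΩ := mΩ) μ K hK p hUnif
end

section
/- If Z ~ N(0, σ²) with σ² > 1, then for every α ∈ (0,1), P(2Φ(−|Z|) ≤ α) > α. -/
open MeasureTheory ProbabilityTheory Set Filter
open scoped NNReal Topology

noncomputable def stdG : Measure ℝ := gaussianReal 0 1

instance : IsProbabilityMeasure stdG := by
  rw [stdG]; infer_instance

lemma stdG_continuous : Continuous (cdf stdG) := by
  rw [continuous_iff_continuousAt]
  intro x
  have hsing : stdG {x} = 0 :=
    gaussianReal_absolutelyContinuous 0 one_ne_zero (measure_singleton x)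
  have hm : (cdf stdG).measure {x} = 0 := by rw [measure_cdf]; exact hsing
  rw [StieltjesFunction.measure_singleton] at hm
  have hle : Function.leftLim (cdf stdG) x ≤ cdf stdG x :=
    (monotone_cdf stdG).leftLim_le le_rfl
  have heq : Function.leftLim (cdf stdG) x = cdf stdG x := by
    have := ENNReal.ofReal_eq_zero.mp hm
    linarith
  have h1 : ContinuousWithinAt (cdf stdG) (Iio x) x :=
    ((monotone_cdf stdG).continuousWithinAt_Iio_iff_leftLim_eq).2 heq
  have h2 : ContinuousWithinAt (cdf stdG) (Ici x) x := (cdf stdG).right_continuous x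
  have := h1.union h2
  rwa [Iio_union_Ici, continuousWithinAt_univ] at this

lemma stdG_strictMono : StrictMono (cdf stdG) := by
  intro a b hab
  have hne : stdG (Ioc a b) ≠ 0 := by
    intro h
    have := gaussianReal_absolutelyContinuous' 0 one_ne_zero h
    rw [Real.volume_Ioc] at this
    simp only [ENNReal.ofReal_eq_zero] at this
    linarith
  have hm : stdG (Ioc a b) = ENNReal.ofReal (cdf stdG b - cdf stdG a) := by
    conv_lhs => rw [← measure_cdf stdG]
    rw [StieltjesFunction.measure_Ioc]
  rw [hm, ne_eq, ENNReal.ofReal_eq_zero, not_le] at hne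
  linarith

lemma stdG_neg : stdG.map (fun x => -x) = stdG := by
  have h := gaussianReal_map_const_mul (μ := 0) (v := 1) (-1)
  have h2 : (fun x : ℝ => -x) = fun x : ℝ => (-1) * x := by funext x; ring
  rw [stdG, h2, h]
  norm_num

lemma stdG_Ici (t : ℝ) : stdG (Ici t) = ENNReal.ofReal (cdf stdG (-t)) := by
  conv_lhs => rw [← stdG_neg]
  rw [Measure.map_apply measurable_neg measurableSet_Ici]
  have : (fun x : ℝ => -x) ⁻¹' (Ici t) = Iic (-t) := by
    ext x; simp [le_neg]
  rw [this, ← ofReal_cdf]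

lemma stdG_zero : cdf stdG 0 = 1/2 := by
  have h1 : stdG (Iic 0) + stdG (Ici 0) = stdG (Iic 0 ∪ Ici 0) + stdG (Iic 0 ∩ Ici 0) :=
    (measure_union_add_inter' measurableSet_Iic (Ici 0)).symm
  have h2 : (Iic (0:ℝ) ∪ Ici 0) = univ := Iic_union_Ici
  have h3 : (Iic (0:ℝ) ∩ Ici 0) = {0} := by ext x; simp [le_antisymm_iff, and_comm]
  have h4 : stdG {(0:ℝ)} = 0 :=
    gaussianReal_absolutelyContinuous 0 one_ne_zero (measure_singleton 0)
  rw [h2, h3, h4, add_zero, measure_univ, stdG_Ici, neg_zero, ← ofReal_cdf,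
    ← ENNReal.ofReal_add (cdf_nonneg _ _) (cdf_nonneg _ _)] at h1
  have := (ENNReal.ofReal_eq_one).mp h1
  linarith

lemma stdG_abs {c : ℝ} (hc : 0 < c) :
    stdG {x : ℝ | c ≤ |x|} = ENNReal.ofReal (2 * cdf stdG (-c)) := by
  have hset : {x : ℝ | c ≤ |x|} = Iic (-c) ∪ Ici c := by
    ext x
    simp only [mem_setOf_eq, mem_union, mem_Iic, mem_Ici, le_abs, le_neg]
    tauto
  have hdisj : Disjoint (Iic (-c)) (Ici c) := by
    rw [Iic_disjoint_Ici]
    exact not_le.mpr (by linarith)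
  rw [hset, measure_union hdisj measurableSet_Ici, ← ofReal_cdf, stdG_Ici,
    ← ENNReal.ofReal_add (cdf_nonneg _ _) (cdf_nonneg _ _)]
  ring_nf

/-- If `Z ~ N(0, σ²)` with `σ² > 1`, then for every `α ∈ (0,1)` the p-value
`2 Φ(-|Z|)` is anti-conservative: `P(2 Φ(-|Z|) ≤ α) > α`. -/
theorem pvalue_anticonservative_of_overdispersed
    {Ω : Type*} {mΩ : MeasurableSpace Ω} (μ : Measure Ω) [IsProbabilityMeasure μ]
    (Z : Ω → ℝ) (hZmeas : Measurable Z) (σ2 : ℝ≥0) (hσ2 : 1 < σ2)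
    (hZ : μ.map Z = gaussianReal 0 σ2) :
    ∀ α ∈ Set.Ioo (0 : ℝ) 1,
      ENNReal.ofReal α < μ {ω | 2 * cdf (gaussianReal 0 1) (-|Z ω|) ≤ α} := by
  intro α hα
  obtain ⟨hα0, hα1⟩ := hα
  have hg : gaussianReal 0 1 = stdG := rfl
  rw [hg]
  -- find the critical value
  have hhalf : α / 2 < 1 := by linarith
  obtain ⟨a, ha⟩ : ∃ a, cdf stdG a < α / 2 :=
    ((tendsto_cdf_atBot stdG).eventually_lt_const (by linarith : (0:ℝ) < α/2)).exists
  obtain ⟨b, hb⟩ : ∃ b, α / 2 < cdf stdG b :=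
    ((tendsto_cdf_atTop stdG).eventually_const_lt hhalf).exists
  have hmem : α / 2 ∈ Icc (cdf stdG (min a b)) (cdf stdG b) :=
    ⟨le_of_lt (lt_of_le_of_lt (monotone_cdf stdG (min_le_left a b)) ha), le_of_lt hb⟩
  obtain ⟨x, _, hxval⟩ :=
    intermediate_value_Icc (min_le_right a b) stdG_continuous.continuousOn hmem
  set c : ℝ := -x with hc_def
  have hxneg : x < 0 := by
    have : cdf stdG x < cdf stdG 0 := by rw [hxval, stdG_zero]; linarith
    exact stdG_strictMono.lt_iff_lt.mp this
  have hc : 0 < c := by simpa [hc_def] using hxneg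
  have hΦc : cdf stdG (-c) = α / 2 := by rw [hc_def, neg_neg, hxval]
  -- rewrite the event set
  have hsetΩ : {ω | 2 * cdf stdG (-|Z ω|) ≤ α} = Z ⁻¹' {y : ℝ | c ≤ |y|} := by
    ext ω
    simp only [mem_setOf_eq, mem_preimage]
    constructor
    · intro h
      have h' : cdf stdG (-|Z ω|) ≤ cdf stdG (-c) := by rw [hΦc]; linarith
      have := stdG_strictMono.le_iff_le.mp h'
      linarith [neg_le_neg this]
    · intro h
      have h' : -|Z ω| ≤ -c := by linarith
      have := stdG_strictMono.monotone h'
      rw [hΦc] at this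
      linarith
  have hsmeas : MeasurableSet {y : ℝ | c ≤ |y|} :=
    measurableSet_le measurable_const measurable_abs
  rw [hsetΩ, ← Measure.map_apply hZmeas hsmeas, hZ]
  -- scaling
  set σ : ℝ := Real.sqrt σ2 with hσ_def
  have hσ2R : (1:ℝ) < (σ2 : ℝ) := by exact_mod_cast hσ2
  have hσ1 : 1 < σ := by
    rw [hσ_def]
    rw [show (1:ℝ) = Real.sqrt 1 by simp]
    exact Real.sqrt_lt_sqrt (by norm_num) hσ2R
  have hσpos : 0 < σ := by linarith
  have hmap : gaussianReal 0 σ2 = stdG.map (fun y => σ * y) := by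
    rw [stdG]
    rw [show (fun y : ℝ => σ * y) = (σ * ·) from rfl, gaussianReal_map_const_mul σ]
    congr 1
    · ring
    · rw [mul_one]
      refine NNReal.coe_injective ?_
      simp only [NNReal.coe_mk]
      exact (Real.sq_sqrt σ2.coe_nonneg).symm
  have hpre : (fun y : ℝ => σ * y) ⁻¹' {y : ℝ | c ≤ |y|} = {y : ℝ | c / σ ≤ |y|} := by
    ext y
    simp only [mem_preimage, mem_setOf_eq, abs_mul, abs_of_pos hσpos]
    rw [div_le_iff₀ hσpos, mul_comm]
  rw [hmap, Measure.map_apply (measurable_const_mul σ) hsmeas, hpre,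
    stdG_abs (div_pos hc hσpos)]
  -- final strict inequality
  have hlt : cdf stdG (-c) < cdf stdG (-(c / σ)) := by
    apply stdG_strictMono
    have : c / σ < c := div_lt_self hc hσ1
    linarith
  rw [hΦc] at hlt
  rw [ENNReal.ofReal_lt_ofReal_iff (by linarith)]
  linarith
end
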